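/- arXiv:2202.05125 — 2 statements merged into one kernel-verified Lean document; each statement's English description precedes it below -/
import Mathlib

section
/- Eliminating j from k = 2 + 2^{j/2−1} and P_even(j) = 2(3^{−j/2} − 2^{−j/2}(2/3)^n) yields, as n → ∞, the limiting distribution P_even(k) = 2·(2(k−2))^{−log 3/log 2}; i.e. P_even(k) is proportional to (k−2)^{−γ} with γ = log 3 / log 2. -/
theorem stmt_9 (j : ℕ) (hj : Even j) (hj4 : 4 ≤ j) :
    Filter.Tendsto
      (fun n : ℕ => 2 * ((3 : ℝ) ^ (-((j : ℤ)) / 2)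
        - (2 : ℝ) ^ (-((j : ℤ)) / 2) * (2 / 3 : ℝ) ^ n))
      Filter.atTop
      (nhds (2 * (2 * ((2 + (2 : ℝ) ^ (j / 2 - 1)) - 2)) ^
        (-(Real.log 3 / Real.log 2)))) := by
  obtain ⟨m, rfl⟩ := hj
  have hm : 2 ≤ m := by omega
  have hdiv : (m + m) / 2 = m := by omega
  have hzdiv : (-((m + m : ℕ) : ℤ)) / 2 = -(m : ℤ) := by push_cast; omega
  have hbase : (2 * ((2 + (2 : ℝ) ^ ((m + m) / 2 - 1)) - 2)) = (2 : ℝ) ^ m := by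
    rw [hdiv]
    have : (2 : ℝ) * 2 ^ (m - 1) = 2 ^ (m - 1 + 1) := by ring
    rw [show (2 + (2:ℝ) ^ (m-1)) - 2 = (2:ℝ)^(m-1) by ring, this,
      show m - 1 + 1 = m by omega]
  have hlog2 : Real.log 2 ≠ 0 := ne_of_gt (Real.log_pos (by norm_num))
  have hkey : ((2 : ℝ) ^ m : ℝ) ^ (-(Real.log 3 / Real.log 2))
      = (3 : ℝ) ^ (-(m : ℤ)) := by
    rw [← Real.rpow_natCast 2 m, ← Real.rpow_intCast 3 (-(m:ℤ))]
    push_cast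
    rw [← Real.rpow_mul (by norm_num),
      Real.rpow_def_of_pos (by norm_num : (0:ℝ) < 2),
      Real.rpow_def_of_pos (by norm_num : (0:ℝ) < 3)]
    congr 1
    field_simp
  have hlim : Filter.Tendsto
      (fun n : ℕ => 2 * ((3 : ℝ) ^ (-((m + m : ℕ) : ℤ) / 2)
        - (2 : ℝ) ^ (-((m + m : ℕ) : ℤ) / 2) * (2 / 3 : ℝ) ^ n))
      Filter.atTop (nhds (2 * ((3 : ℝ) ^ (-((m + m : ℕ) : ℤ) / 2)
        - (2 : ℝ) ^ (-((m + m : ℕ) : ℤ) / 2) * 0))) := by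
    apply Filter.Tendsto.const_mul
    apply Filter.Tendsto.const_sub
    apply Filter.Tendsto.const_mul
    exact tendsto_pow_atTop_nhds_zero_of_lt_one (by norm_num) (by norm_num)
  have : (2 * ((3 : ℝ) ^ (-((m + m : ℕ) : ℤ) / 2)
      - (2 : ℝ) ^ (-((m + m : ℕ) : ℤ) / 2) * 0))
      = 2 * (2 * ((2 + (2 : ℝ) ^ ((m + m) / 2 - 1)) - 2)) ^
        (-(Real.log 3 / Real.log 2)) := by
    rw [hbase, hkey, hzdiv]
    ring
  rw [← this]
  exact hlim
end

section
/- The second moment of the HVG degree distribution diverges: ∑_{even j, 4 ≤ j ≤ 2n−2} (2 + 2^{j/2−1})^2 · 2·3^{−j/2} grows at least like a constant times (4/3)^n as n → ∞, hence ⟨k²(n)⟩ → ∞. -/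
theorem stmt_10 (S : ℕ → ℝ)
    (hdef : ∀ n, S n = ∑ j ∈ (Finset.Icc 4 (2 * n - 2)).filter (fun j => Even j),
        ((2 + (2 : ℝ) ^ (j / 2 - 1)) ^ 2) * (2 * (3 : ℝ) ^ (-((j : ℤ)) / 2))) :
    (∃ c : ℝ, 0 < c ∧ ∀ᶠ n in Filter.atTop, c * (4 / 3 : ℝ) ^ n ≤ S n) ∧
      Filter.Tendsto S Filter.atTop Filter.atTop := by
  have key : ∀ n : ℕ, 3 ≤ n → (3/8 : ℝ) * (4/3)^n ≤ S n := by
    intro n hn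
    obtain ⟨m, rfl⟩ : ∃ m, n = m + 3 := ⟨n - 3, by omega⟩
    rw [hdef]
    have h2 : 2*(m+3)-2 = 2*m+4 := by omega
    have hmem : 2*m+4 ∈ (Finset.Icc 4 (2*(m+3)-2)).filter (fun j => Even j) := by
      simp only [Finset.mem_filter, Finset.mem_Icc]
      exact ⟨⟨by omega, by omega⟩, ⟨m+2, by omega⟩⟩
    have hle := Finset.single_le_sum
      (f := fun j : ℕ => ((2 + (2:ℝ) ^ (j/2 - 1))^2) * (2 * (3:ℝ) ^ (-((j:ℤ))/2)))
      (fun i _ => by positivity) hmem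
    refine le_trans ?_ hle
    beta_reduce
    have h3 : (2*m+4)/2 - 1 = m+1 := by omega
    have hexp : (-(((2*m+4 : ℕ)) : ℤ))/2 = -(((m+2 : ℕ)) : ℤ) := by push_cast; omega
    rw [h3, hexp, zpow_neg, zpow_natCast]
    have hA : (3/8 : ℝ) * (4/3)^(m+3) = ((2:ℝ)^(m+1))^2 * (2 * ((3:ℝ)^(m+2))⁻¹) := by
      have h3ne : (3:ℝ)^(m+2) ≠ 0 := by positivity
      have h4 : ((2:ℝ)^(m+1))^2 = 4^(m+1) := by
        rw [← pow_mul, mul_comm, pow_mul]; norm_num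
      rw [h4]
      field_simp
      ring_nf; rw [← mul_pow]; norm_num
    rw [hA]
    apply mul_le_mul_of_nonneg_right
    · exact pow_le_pow_left₀ (by positivity) (by linarith) 2
    · positivity
  constructor
  · exact ⟨3/8, by norm_num, Filter.eventually_atTop.mpr ⟨3, key⟩⟩
  · refine Filter.tendsto_atTop_mono' _ (Filter.eventually_atTop.mpr ⟨3, key⟩) ?_
    exact (tendsto_pow_atTop_atTop_of_one_lt (by norm_num : (1:ℝ) < 4/3)).const_mul_atTop (by norm_num)
end
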